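/- For a rooted binary oriented tree in which each internal vertex v is assigned a parameter p_v ∈ [0,1], and each bifurcation event at a vertex w occurs with probability equal to the product of p_v over all ancestors v of w such that w is in the left subtree of v, times the product of (1-p_v) over ancestors v with w in the right subtree of v, the probability of any particular ranking of the tree equals ∏_{j} p_{v_j}^{n_j} (1-p_{v_j})^{m_j}, where n_j and m_j are the numbers of internal vertices in the left and right subtrees of v_j; in particular this probability is independent of the ranking, so all rankings of the oriented tree are equally likely. -/

import Mathlib

/-- A rooted binary tree with ordered (left/right) children. -/
inductive OTree : Type
  | leaf : OTree
  | node : OTree → OTree → OTree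
deriving DecidableEq

/-- Number of leaves. -/
def OTree.nLeaves : OTree → ℕ
  | .leaf => 1
  | .node l r => l.nLeaves + r.nLeaves

/-- Number of internal nodes. -/
def OTree.nInt : OTree → ℕ
  | .leaf => 0
  | .node l r => l.nInt + r.nInt + 1

/-- `t.isInt p` : the path `p` (`true` = left) leads to an internal node of `t`. -/
def OTree.isInt : OTree → List Bool → Prop
  | .leaf, _ => False
  | .node _ _, [] => True
  | .node l _, true :: p => l.isInt p
  | .node _ r, false :: p => r.isInt p

/-- `t.isLf p` : the path `p` leads to a leaf of `t`. -/
def OTree.isLf : OTree → List Bool → Prop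
  | .leaf, [] => True
  | .leaf, _ :: _ => False
  | .node _ _, [] => False
  | .node l _, true :: p => l.isLf p
  | .node _ r, false :: p => r.isLf p

/-- A ranking of the internal nodes of `t`: a bijection to `{1,…,n-1}` (here `Fin t.nInt`)
which strictly increases along every root-to-leaf path. -/
structure Ranking (t : OTree) where
  rk : {p : List Bool // t.isInt p} → Fin t.nInt
  bij : Function.Bijective rk
  mono : ∀ p q : {p : List Bool // t.isInt p}, p.1 <+: q.1 → p.1 ≠ q.1 → rk p < rk q

/-- A ranked oriented tree. -/
def RankedOTree := Σ t : OTree, Ranking t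

/-- The subtree rooted at the end of path `p`. -/
def OTree.subtreeAt : OTree → List Bool → OTree
  | t, [] => t
  | .leaf, _ :: _ => .leaf
  | .node l _, true :: p => l.subtreeAt p
  | .node _ r, false :: p => r.subtreeAt p

/-- The list of internal positions of a tree. -/
def intPositions : OTree → List (List Bool)
  | .leaf => []
  | .node l r => [] :: ((intPositions l).map (true :: ·) ++ (intPositions r).map (false :: ·))

/-- The probability that a bifurcation occurs at the internal position `w`, under the CRP model
with parameters `p`: the product over proper ancestors `v` of `w` of `p v` if `w` lies in the
left subtree of `v` and of `1 - p v` otherwise. -/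
def wt (p : List Bool → ℝ) (w : List Bool) : ℝ :=
  ∏ i ∈ Finset.range w.length,
    (if w.getD i true then p (w.take i) else 1 - p (w.take i))

/-!
The weight `wt p w` of a bifurcation at `w` is a product over the proper ancestors of `w`.
Multiplying over all internal vertices and regrouping by ancestor, each vertex `v` contributes
one factor `p v` for every internal vertex of its left subtree and one factor `1 - p v` for
every internal vertex of its right subtree. A ranking only lists the internal vertices in some
order, so the product in rank order is a reordering of this product.
-/

lemma wt_nil (p : List Bool → ℝ) : wt p [] = 1 := by simp [wt]

lemma wt_cons (p : List Bool → ℝ) (b : Bool) (w : List Bool) :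
    wt p (b :: w) = (if b then p [] else 1 - p []) * wt (fun q => p (b :: q)) w := by
  unfold wt
  rw [List.length_cons, Finset.prod_range_succ']
  simp [mul_comm]

lemma length_intPositions (t : OTree) : (intPositions t).length = t.nInt := by
  induction t with
  | leaf => rfl
  | node l r ihl ihr => simp [intPositions, OTree.nInt, ihl, ihr]

lemma mem_intPositions_iff {t : OTree} {w : List Bool} : w ∈ intPositions t ↔ t.isInt w := by
  induction t generalizing w with
  | leaf => simp [intPositions, OTree.isInt]
  | node l r ihl ihr =>
    rcases w with _ | ⟨_ | _, w⟩ <;> simp [intPositions, OTree.isInt, ihl, ihr]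

lemma nodup_intPositions (t : OTree) : (intPositions t).Nodup := by
  induction t with
  | leaf => exact List.nodup_nil
  | node l r ihl ihr =>
    simp only [intPositions, List.nodup_cons, List.nodup_append]
    refine ⟨by simp, ihl.map List.cons_injective, ihr.map List.cons_injective, ?_⟩
    simp

lemma prod_surjInv_eq_prod_intPositions {M ι : Type*} [CommMonoid M] [Fintype ι]
    {t : OTree} {e : {w // t.isInt w} → ι} (he : Function.Bijective e) (f : List Bool → M) :
    ∏ k, f (Function.surjInv he.surjective k).1 = ((intPositions t).map f).prod := by
  rw [← List.prod_toFinset _ (nodup_intPositions t)]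
  refine Finset.prod_bij (fun k _ => (Function.surjInv he.surjective k).1)
    (fun k _ => List.mem_toFinset.mpr
      (mem_intPositions_iff.mpr (Function.surjInv he.surjective k).2))
    (fun _ _ _ _ h => Function.injective_surjInv _ (Subtype.ext h)) ?_ (fun _ _ => rfl)
  intro w hw
  have hint : t.isInt w := mem_intPositions_iff.mp (List.mem_toFinset.mp hw)
  exact ⟨e ⟨w, hint⟩, Finset.mem_univ _,
    congrArg Subtype.val (Function.leftInverse_surjInv he ⟨w, hint⟩)⟩

lemma prod_map_wt_cons (p : List Bool → ℝ) (b : Bool) (L : List (List Bool)) :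
    (L.map fun w => wt p (b :: w)).prod
      = (if b then p [] else 1 - p []) ^ L.length * (L.map (wt fun q => p (b :: q))).prod := by
  induction L with
  | nil => simp
  | cons w L ih =>
    rw [List.map_cons, List.prod_cons, wt_cons, ih, List.map_cons, List.prod_cons,
      List.length_cons, pow_succ]
    ring

lemma prod_map_wt_intPositions (t : OTree) (p : List Bool → ℝ) :
    ((intPositions t).map (wt p)).prod
      = ((intPositions t).map fun v =>
          p v ^ (t.subtreeAt (v ++ [true])).nInt
            * (1 - p v) ^ (t.subtreeAt (v ++ [false])).nInt).prod := by
  induction t generalizing p with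
  | leaf => rfl
  | node l r ihl ihr =>
    simp only [intPositions, List.map_cons, List.map_append, List.prod_cons, List.prod_append,
      List.map_map, Function.comp_def, List.cons_append, List.nil_append, OTree.subtreeAt]
    rw [prod_map_wt_cons, prod_map_wt_cons, ihl, ihr, wt_nil, length_intPositions,
      length_intPositions]
    simp only [if_true, Bool.false_eq_true, if_false]
    ring

theorem stmt13_general (t : OTree) (p : List Bool → ℝ) (rk : Ranking t) :
    ∏ k : Fin t.nInt, wt p (Function.surjInv rk.bij.surjective k).1
      = ((intPositions t).map fun v =>
          p v ^ (t.subtreeAt (v ++ [true])).nInt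
            * (1 - p v) ^ (t.subtreeAt (v ++ [false])).nInt).prod := by
  rw [prod_surjInv_eq_prod_intPositions rk.bij, prod_map_wt_intPositions]

/-- under the CRP model with parameters p_v ∈ [0,1], the probability of any
ranking of an oriented tree — the product, in rank (time) order, of the probabilities of its
bifurcation events — equals ∏_v p_v^{n_v} (1-p_v)^{m_v}, where n_v and m_v are the numbers of
internal vertices in the left and right subtrees of v; in particular it does not depend on the
ranking, so all rankings are equally likely. -/
theorem stmt13 (t : OTree) (p : List Bool → ℝ) (hp : ∀ q, p q ∈ Set.Icc (0 : ℝ) 1)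
    (rk : Ranking t) :
    ∏ k : Fin t.nInt, wt p (Function.surjInv rk.bij.surjective k).1
      = ((intPositions t).map fun v =>
          p v ^ (t.subtreeAt (v ++ [true])).nInt
            * (1 - p v) ^ (t.subtreeAt (v ++ [false])).nInt).prod :=
  stmt13_general t p rk
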